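/- arXiv:2511.06695 — 7 statements merged into one kernel-verified Lean document; each statement's English description precedes it below -/
import Mathlib

section
/- Let n ≥ 1 and let C be a real invertible n×n matrix such that the real part of x*Cx is strictly positive for every nonzero vector x ∈ ℂⁿ (where x* denotes the conjugate transpose of x). Define Φ := −CᵀC⁻¹, regarded as a complex n×n matrix. Then every complex eigenvalue λ of Φ satisfies |λ| = 1. -/
/-!
Write an eigenvector of `Φ = -Cᴴ C⁻¹` as `x = C y`. The eigen-equation becomes
`-Cᴴ y = μ C y`; pairing with `y` gives `-conj s = μ s` for `s = y* C y`, and `s ≠ 0`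
because its real part is positive. Taking absolute values yields `|μ| = 1`.
-/

open Matrix

variable {ι 𝕜 : Type*} [Fintype ι] [RCLike 𝕜]

theorem RCLike.norm_eq_one_of_neg_star_eq_mul {s μ : 𝕜} (hs : s ≠ 0) (h : -star s = μ * s) :
    ‖μ‖ = 1 := by
  have : ‖μ‖ * ‖s‖ = 1 * ‖s‖ := by
    rw [← norm_mul, ← h, norm_neg, RCLike.star_def, RCLike.norm_conj, one_mul]
  exact mul_right_cancel₀ (norm_ne_zero_iff.mpr hs) this

theorem Matrix.star_dotProduct_conjTranspose_mulVec (A : Matrix ι ι 𝕜) (y : ι → 𝕜) :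
    star y ⬝ᵥ (Aᴴ *ᵥ y) = star (star y ⬝ᵥ (A *ᵥ y)) := by
  rw [dotProduct_mulVec, vecMul_conjTranspose, star_dotProduct, star_star]

theorem Matrix.norm_eq_one_of_neg_conjTranspose_mulVec_eq_smul_mulVec {A : Matrix ι ι 𝕜}
    {y : ι → 𝕜} {μ : 𝕜} (hy : star y ⬝ᵥ (A *ᵥ y) ≠ 0) (h : -(Aᴴ *ᵥ y) = μ • (A *ᵥ y)) :
    ‖μ‖ = 1 := by
  refine RCLike.norm_eq_one_of_neg_star_eq_mul hy ?_
  rw [← star_dotProduct_conjTranspose_mulVec, ← smul_eq_mul, ← dotProduct_smul, ← h,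
    dotProduct_neg]

section Invertible

variable [DecidableEq ι]

theorem Matrix.norm_eq_one_of_neg_conjTranspose_mul_inv_mulVec_eq_smul {A : Matrix ι ι 𝕜}
    (hA : IsUnit A) (hform : ∀ y, y ≠ 0 → star y ⬝ᵥ (A *ᵥ y) ≠ 0) {μ : 𝕜} {x : ι → 𝕜}
    (hx : x ≠ 0) (h : -(Aᴴ * A⁻¹) *ᵥ x = μ • x) : ‖μ‖ = 1 := by
  have hAy : A *ᵥ (A⁻¹ *ᵥ x) = x := by
    rw [mulVec_mulVec, mul_nonsing_inv A ((isUnit_iff_isUnit_det A).mp hA), one_mulVec]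
  have hy : A⁻¹ *ᵥ x ≠ 0 := fun h0 => hx (by rw [← hAy, h0, mulVec_zero])
  refine norm_eq_one_of_neg_conjTranspose_mulVec_eq_smul_mulVec (hform _ hy) ?_
  rw [hAy, ← h, neg_mulVec, mulVec_mulVec]

theorem Matrix.inv_mapMatrix {R S : Type*} [CommRing R] [CommRing S] (f : R →+* S)
    {A : Matrix ι ι R} (hA : IsUnit A) : (f.mapMatrix A)⁻¹ = f.mapMatrix A⁻¹ :=
  inv_eq_right_inv <| by
    rw [← map_mul, mul_nonsing_inv A ((isUnit_iff_isUnit_det A).mp hA), map_one]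

end Invertible

theorem stmt_1_general (n : ℕ) (C : Matrix (Fin n) (Fin n) ℝ)
    (hinv : IsUnit C)
    (hC : ∀ x : Fin n → ℂ, x ≠ 0 →
      0 < (star x ⬝ᵥ ((C.map Complex.ofReal) *ᵥ x)).re)
    (Φ : Matrix (Fin n) (Fin n) ℂ)
    (hΦ : Φ = (-(Cᵀ * C⁻¹)).map Complex.ofReal) :
    ∀ (μ : ℂ) (x : Fin n → ℂ), x ≠ 0 → Φ *ᵥ x = μ • x → ‖μ‖ = 1 := by
  intro μ x hx heig
  have hmap : ∀ M : Matrix (Fin n) (Fin n) ℝ,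
      M.map Complex.ofReal = Complex.ofRealHom.mapMatrix M := fun _ => rfl
  have hΦC : Φ = -((C.map Complex.ofReal)ᴴ * (C.map Complex.ofReal)⁻¹) := by
    rw [hΦ, hmap C, inv_mapMatrix _ hinv, ← hmap,
      ← conjTranspose_map _ fun r => (Complex.conj_ofReal r).symm,
      conjTranspose_eq_transpose_of_trivial]
    simp only [hmap, map_neg, map_mul]
  refine norm_eq_one_of_neg_conjTranspose_mul_inv_mulVec_eq_smul
    (by simpa only [hmap] using hinv.map Complex.ofRealHom.mapMatrix)
    (fun y hy h0 => (hC y hy).ne' (by rw [h0, Complex.zero_re])) hx (hΦC ▸ heig)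

/-- If a real invertible `n × n` matrix `C` satisfies that `x* C x` has strictly positive
real part for every nonzero complex vector `x`, then every complex eigenvalue `μ` of the
Coxeter matrix `Φ = -Cᵀ C⁻¹` satisfies `|μ| = 1`. -/
theorem stmt_1 (n : ℕ) (hn : 1 ≤ n) (C : Matrix (Fin n) (Fin n) ℝ)
    (hinv : IsUnit C)
    (hC : ∀ x : Fin n → ℂ, x ≠ 0 →
      0 < (star x ⬝ᵥ ((C.map Complex.ofReal) *ᵥ x)).re)
    (Φ : Matrix (Fin n) (Fin n) ℂ)
    (hΦ : Φ = (-(Cᵀ * C⁻¹)).map Complex.ofReal) :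
    ∀ (μ : ℂ) (x : Fin n → ℂ), x ≠ 0 → Φ *ᵥ x = μ • x → ‖μ‖ = 1 :=
  stmt_1_general n C hinv hC Φ hΦ
end

section
/- Let n ≥ 1 and let C be a real invertible n×n matrix such that the real part of x*Cx is strictly positive for every nonzero vector x ∈ ℂⁿ (where x* denotes the conjugate transpose of x). Define Φ := −CᵀC⁻¹, regarded as a complex n×n matrix. Then Φ is diagonalizable over ℂ; equivalently, for every λ ∈ ℂ and every y ∈ ℂⁿ, (Φ − λI)²y = 0 implies (Φ − λI)y = 0 (there are no generalized eigenvectors of rank 2). -/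
open Matrix

/-!
With `A = C` over `ℂ` and `B = C⁻¹`, the matrix `Φ = -Aᴴ B` is an isometry of the
sesquilinear form `h(p, q) = p* B q`, i.e. `Φᴴ B Φ = B`, and `h(p, p) = conj ((Bp)* A (Bp))`
is nonzero for `p ≠ 0`.
An isometry of such an anisotropic form has no Jordan block of size two: if `Φ z = μ z` with
`z ≠ 0` and `Φ y = μ y + z`, then `h(z, z) = |μ|² h(z, z)` gives `|μ| = 1`, and then
`h(z, y) = h(Φ z, Φ y) = h(z, y) + conj μ · h(z, z)` forces `h(z, z) = 0`.
-/

section IsometryOfAnisotropicForm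

variable {ι K : Type*} [Fintype ι] [Field K] [StarRing K]

theorem Matrix.star_mulVec_dotProduct_mulVec_mulVec {Φ S : Matrix ι ι K}
    (hΦ : Φᴴ * S * Φ = S) (p q : ι → K) :
    star (Φ *ᵥ p) ⬝ᵥ (S *ᵥ (Φ *ᵥ q)) = star p ⬝ᵥ (S *ᵥ q) := by
  rw [star_mulVec, ← dotProduct_mulVec, mulVec_mulVec, mulVec_mulVec, hΦ]

variable [DecidableEq ι]

theorem Matrix.mulVec_sub_smul_eq_zero_of_sq_mulVec_eq_zero {Φ S : Matrix ι ι K}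
    (hΦ : Φᴴ * S * Φ = S) (hS : ∀ x, x ≠ 0 → star x ⬝ᵥ (S *ᵥ x) ≠ 0)
    (μ : K) (y : ι → K)
    (hy : ((Φ - μ • 1) ^ 2) *ᵥ y = 0) : (Φ - μ • 1) *ᵥ y = 0 := by
  set z := (Φ - μ • 1) *ᵥ y with hz
  by_contra hz0
  have hΦz : Φ *ᵥ z = μ • z := by
    rw [← sub_eq_zero, ← hy, sq, ← mulVec_mulVec, sub_mulVec, smul_mulVec, one_mulVec]
  have hΦy : Φ *ᵥ y = μ • y + z := by
    rw [hz, sub_mulVec, smul_mulVec, one_mulVec, add_sub_cancel]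
  have hzz := star_mulVec_dotProduct_mulVec_mulVec hΦ z z
  have hzy := star_mulVec_dotProduct_mulVec_mulVec hΦ z y
  rw [hΦz, star_smul, mulVec_smul, smul_dotProduct, dotProduct_smul, smul_eq_mul,
    smul_eq_mul] at hzz
  rw [hΦz, hΦy, star_smul, mulVec_add, mulVec_smul, dotProduct_add, smul_dotProduct,
    smul_dotProduct, dotProduct_smul, smul_eq_mul, smul_eq_mul, smul_eq_mul] at hzy
  set β := star z ⬝ᵥ (S *ᵥ z)
  have hβ : β ≠ 0 := hS z hz0
  have hμ : star μ * μ = 1 := by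
    apply mul_right_cancel₀ hβ
    linear_combination hzz
  have hμβ : star μ * β = 0 := by linear_combination hzy - (star z ⬝ᵥ (S *ᵥ y)) * hμ
  have hμ0 : star μ ≠ 0 := left_ne_zero_of_mul_eq_one hμ
  exact hβ ((mul_eq_zero.mp hμβ).resolve_left hμ0)

variable {A B : Matrix ι ι K}

theorem Matrix.conjTranspose_mul_mul_neg_conjTranspose_mul (hAB : A * B = 1) :
    (-(Aᴴ * B))ᴴ * B * -(Aᴴ * B) = B := by
  rw [conjTranspose_neg, conjTranspose_mul, conjTranspose_conjTranspose, Matrix.neg_mul,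
    Matrix.neg_mul, Matrix.mul_neg, neg_neg, Matrix.mul_assoc Bᴴ, hAB, Matrix.mul_one,
    ← Matrix.mul_assoc, ← conjTranspose_mul, hAB, conjTranspose_one, Matrix.one_mul]

theorem Matrix.star_dotProduct_mulVec_ne_zero_of_mul_eq_one (hAB : A * B = 1)
    (hA : ∀ x, x ≠ 0 → star x ⬝ᵥ (A *ᵥ x) ≠ 0) (x : ι → K) (hx : x ≠ 0) :
    star x ⬝ᵥ (B *ᵥ x) ≠ 0 := by
  have hABx : A *ᵥ (B *ᵥ x) = x := by rw [mulVec_mulVec, hAB, one_mulVec]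
  have hBx : B *ᵥ x ≠ 0 := fun h => hx (by rw [← hABx, h, mulVec_zero])
  have h := hA _ hBx
  rwa [hABx, star_dotProduct, star_ne_zero] at h

end IsometryOfAnisotropicForm

theorem stmt_3_general (n : ℕ) (C : Matrix (Fin n) (Fin n) ℝ)
    (hinv : IsUnit C)
    (hC : ∀ x : Fin n → ℂ, x ≠ 0 →
      0 < (star x ⬝ᵥ ((C.map Complex.ofReal) *ᵥ x)).re)
    (Φ : Matrix (Fin n) (Fin n) ℂ)
    (hΦ : Φ = (-(Cᵀ * C⁻¹)).map Complex.ofReal) :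
    ∀ (μ : ℂ) (y : Fin n → ℂ),
      ((Φ - μ • (1 : Matrix (Fin n) (Fin n) ℂ)) ^ 2) *ᵥ y = 0 →
        (Φ - μ • (1 : Matrix (Fin n) (Fin n) ℂ)) *ᵥ y = 0 := by
  have ofReal_map_mul (P Q : Matrix (Fin n) (Fin n) ℝ) :
      (P * Q).map Complex.ofReal = P.map Complex.ofReal * Q.map Complex.ofReal :=
    Matrix.map_mul (f := Complex.ofRealHom)
  have hAB : C.map Complex.ofReal * C⁻¹.map Complex.ofReal = 1 := by
    rw [← ofReal_map_mul, mul_nonsing_inv C ((isUnit_iff_isUnit_det C).mp hinv),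
      Matrix.map_one _ Complex.ofReal_zero Complex.ofReal_one]
  have hΦA : Φ = -((C.map Complex.ofReal)ᴴ * C⁻¹.map Complex.ofReal) := by
    rw [hΦ, Matrix.map_neg _ Complex.ofReal_neg, ofReal_map_mul,
      ← conjTranspose_eq_transpose_of_trivial,
      conjTranspose_map _ fun _ => (Complex.conj_ofReal _).symm]
  have hA (x : Fin n → ℂ) (hx : x ≠ 0) : star x ⬝ᵥ (C.map Complex.ofReal *ᵥ x) ≠ 0 :=
    fun h => (hC x hx).ne' (by rw [h, Complex.zero_re])
  rw [hΦA]
  exact mulVec_sub_smul_eq_zero_of_sq_mulVec_eq_zero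
    (conjTranspose_mul_mul_neg_conjTranspose_mul hAB)
    (star_dotProduct_mulVec_ne_zero_of_mul_eq_one hAB hA)

/-- If a real invertible `n × n` matrix `C` satisfies that `x* C x` has strictly positive
real part for every nonzero complex vector `x`, then the Coxeter matrix `Φ = -Cᵀ C⁻¹` is
diagonalizable over `ℂ`: for every `μ : ℂ` and every vector `y`, `(Φ - μ I)² y = 0`
implies `(Φ - μ I) y = 0` (no generalized eigenvectors of rank 2). -/
theorem stmt_3 (n : ℕ) (hn : 1 ≤ n) (C : Matrix (Fin n) (Fin n) ℝ)
    (hinv : IsUnit C)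
    (hC : ∀ x : Fin n → ℂ, x ≠ 0 →
      0 < (star x ⬝ᵥ ((C.map Complex.ofReal) *ᵥ x)).re)
    (Φ : Matrix (Fin n) (Fin n) ℂ)
    (hΦ : Φ = (-(Cᵀ * C⁻¹)).map Complex.ofReal) :
    ∀ (μ : ℂ) (y : Fin n → ℂ),
      ((Φ - μ • (1 : Matrix (Fin n) (Fin n) ℂ)) ^ 2) *ᵥ y = 0 →
        (Φ - μ • (1 : Matrix (Fin n) (Fin n) ℂ)) *ᵥ y = 0 :=
  stmt_3_general n C hinv hC Φ hΦ
end

section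
/- Let n ≥ 1 and let C be a real n×n matrix. Then the following are equivalent: (i) the real part of x*Cx is strictly positive for every nonzero x ∈ ℂⁿ (where x* is the conjugate transpose of x); (ii) C is invertible and vᵀC⁻ᵀv > 0 for every nonzero v ∈ ℝⁿ, where C⁻ᵀ denotes the inverse of the transpose of C. -/
/-!
Writing `x = a + i b` with `a, b` real, the real part of `x* C x` is `aᵀ C a + bᵀ C b`, so
condition (i) says exactly that the real quadratic form of `C` is positive definite. Such a
form has no nonzero isotropic vector, so `C` is injective, hence invertible; and substituting
`v = C w` turns `vᵀ C⁻¹ v` into `wᵀ C w`. Finally a real quadratic form does not see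
transposition, so `C⁻ᵀ` may replace `C⁻¹`.
-/

open Matrix

namespace Matrix

variable {ι : Type*} [Fintype ι]

theorem re_star_dotProduct_map_ofReal_mulVec (C : Matrix ι ι ℝ) (x : ι → ℂ) :
    (star x ⬝ᵥ (C.map Complex.ofReal *ᵥ x)).re =
      (fun i => (x i).re) ⬝ᵥ (C *ᵥ fun i => (x i).re) +
        (fun i => (x i).im) ⬝ᵥ (C *ᵥ fun i => (x i).im) := by
  simp only [dotProduct, mulVec, map_apply, Pi.star_apply, Complex.star_def, Complex.re_sum,
    Complex.mul_re, Complex.mul_im, Complex.conj_re, Complex.conj_im, Complex.ofReal_re,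
    Complex.ofReal_im, Finset.mul_sum, ← Finset.sum_add_distrib]
  refine Finset.sum_congr rfl fun i _ => Finset.sum_congr rfl fun j _ => ?_
  ring

theorem forall_re_star_dotProduct_map_ofReal_mulVec_pos_iff (C : Matrix ι ι ℝ) :
    (∀ x : ι → ℂ, x ≠ 0 → 0 < (star x ⬝ᵥ (C.map Complex.ofReal *ᵥ x)).re) ↔
      ∀ v : ι → ℝ, v ≠ 0 → 0 < v ⬝ᵥ (C *ᵥ v) := by
  constructor
  · intro h v hv
    have hv' : (fun i => (v i : ℂ)) ≠ 0 := fun h0 =>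
      hv (funext fun i => Complex.ofReal_eq_zero.mp (congrFun h0 i))
    simpa [re_star_dotProduct_map_ofReal_mulVec] using h _ hv'
  · intro h x hx
    have hnonneg (v : ι → ℝ) : 0 ≤ v ⬝ᵥ (C *ᵥ v) := by
      rcases eq_or_ne v 0 with rfl | hv
      · simp
      · exact (h v hv).le
    rw [re_star_dotProduct_map_ofReal_mulVec]
    by_cases hre : (fun i => (x i).re) = 0
    · have him : (fun i => (x i).im) ≠ 0 := fun him =>
        hx (funext fun i => Complex.ext (congrFun hre i) (congrFun him i))
      linarith [h _ him, hnonneg fun i => (x i).re]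
    · linarith [h _ hre, hnonneg fun i => (x i).im]

variable [DecidableEq ι]

theorem isUnit_of_forall_dotProduct_mulVec_pos {K : Type*} [Field K] [Preorder K]
    {A : Matrix ι ι K} (h : ∀ v : ι → K, v ≠ 0 → 0 < v ⬝ᵥ (A *ᵥ v)) : IsUnit A := by
  rw [← mulVec_injective_iff_isUnit]
  intro v w hvw
  by_contra hne
  have := h (v - w) (sub_ne_zero.mpr hne)
  rw [mulVec_sub, hvw, sub_self, dotProduct_zero] at this
  exact this.false

variable {R : Type*} [CommRing R] [Preorder R]

theorem forall_dotProduct_inv_mulVec_pos {A : Matrix ι ι R} (hA : IsUnit A)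
    (h : ∀ v : ι → R, v ≠ 0 → 0 < v ⬝ᵥ (A *ᵥ v)) :
    ∀ v : ι → R, v ≠ 0 → 0 < v ⬝ᵥ (A⁻¹ *ᵥ v) := by
  intro v hv
  have hdet : IsUnit A.det := (isUnit_iff_isUnit_det A).mp hA
  set w := A⁻¹ *ᵥ v
  have hvw : A *ᵥ w = v := by
    rw [mulVec_mulVec, mul_nonsing_inv A hdet, one_mulVec]
  have hw : w ≠ 0 := fun hw => hv (by rw [← hvw, hw, mulVec_zero])
  calc 0 < w ⬝ᵥ (A *ᵥ w) := h w hw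
    _ = v ⬝ᵥ w := by rw [hvw, dotProduct_comm]

theorem forall_dotProduct_inv_mulVec_pos_iff {A : Matrix ι ι R} (hA : IsUnit A) :
    (∀ v : ι → R, v ≠ 0 → 0 < v ⬝ᵥ (A⁻¹ *ᵥ v)) ↔ ∀ v : ι → R, v ≠ 0 → 0 < v ⬝ᵥ (A *ᵥ v) := by
  refine ⟨fun h => ?_, forall_dotProduct_inv_mulVec_pos hA⟩
  rw [← nonsing_inv_nonsing_inv A ((isUnit_iff_isUnit_det A).mp hA)]
  exact forall_dotProduct_inv_mulVec_pos (isUnit_nonsing_inv_iff.mpr hA) h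

end Matrix

theorem stmt_4_general (n : ℕ) (C : Matrix (Fin n) (Fin n) ℝ) :
    (∀ x : Fin n → ℂ, x ≠ 0 →
        0 < (star x ⬝ᵥ ((C.map Complex.ofReal) *ᵥ x)).re) ↔
      (IsUnit C ∧ ∀ v : Fin n → ℝ, v ≠ 0 → 0 < v ⬝ᵥ ((Cᵀ)⁻¹ *ᵥ v)) := by
  have hform (v : Fin n → ℝ) : v ⬝ᵥ ((Cᵀ)⁻¹ *ᵥ v) = v ⬝ᵥ (C⁻¹ *ᵥ v) := by
    rw [← transpose_nonsing_inv, dotProduct_transpose_mulVec]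
  simp only [hform, forall_re_star_dotProduct_map_ofReal_mulVec_pos_iff]
  constructor
  · intro h
    have hC := isUnit_of_forall_dotProduct_mulVec_pos h
    exact ⟨hC, (forall_dotProduct_inv_mulVec_pos_iff hC).mpr h⟩
  · rintro ⟨hC, h⟩
    exact (forall_dotProduct_inv_mulVec_pos_iff hC).mp h

/-- For a real `n × n` matrix `C`, the quadratic form `x ↦ x* C x` has strictly positive
real part for every nonzero complex vector `x` if and only if `C` is invertible and the
Euler form `v ↦ vᵀ C⁻ᵀ v` is positive definite on real vectors. -/
theorem stmt_4 (n : ℕ) (hn : 1 ≤ n) (C : Matrix (Fin n) (Fin n) ℝ) :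
    (∀ x : Fin n → ℂ, x ≠ 0 →
        0 < (star x ⬝ᵥ ((C.map Complex.ofReal) *ᵥ x)).re) ↔
      (IsUnit C ∧ ∀ v : Fin n → ℝ, v ≠ 0 → 0 < v ⬝ᵥ ((Cᵀ)⁻¹ *ᵥ v)) :=
  stmt_4_general n C
end

section
/- Let ℓ ≥ 3 be an integer. Consider the matrices A = [[−1, 0], [ℓ, 1]] and B = [[1, ℓ], [0, −1]] in GL(2, ℤ) (both have determinant −1). Then neither the negative identity matrix −I nor the matrix [[0, −1], [−1, 0]] belongs to the subgroup of GL(2, ℤ) generated by A and B. -/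
/-!
`A` and `B` are involutions, so every element of the group they generate is `(A * B) ^ n` or
`A * (A * B) ^ n` with `n : ℤ`; for a target `T` among `-I` and `J = [[0, -1], [-1, 0]]` it
therefore suffices that `(A * B) ^ n` is neither `T` nor `A * T`. For `ℓ ≥ 2`, right
multiplication by `A * B = [[-1, -ℓ], [ℓ, ℓ² - 1]]` preserves the cone `0 ≤ c < d` of integer
row vectors `(c, d)`, so the bottom row of `(A * B) ^ k`, `k ≥ 0`, lies in it. None of `-I`, `J`,
`-A`, `A * J` and their inverses has its bottom row in the cone, which rules out positive and
negative powers alike.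
-/

theorem exists_zpow_of_mem_closure_pair {G : Type*} [Group G] {a b : G} (ha : a * a = 1)
    (hb : b * b = 1) {g : G} (hg : g ∈ Subgroup.closure {a, b}) :
    ∃ n : ℤ, g = (a * b) ^ n ∨ g = a * (a * b) ^ n := by
  have closed_mul_left : ∀ x ∈ ({a, b} : Set G), ∀ y : G,
      (∃ n : ℤ, y = (a * b) ^ n ∨ y = a * (a * b) ^ n) →
      ∃ n : ℤ, x * y = (a * b) ^ n ∨ x * y = a * (a * b) ^ n := by
    rintro x (rfl | rfl) y ⟨n, rfl | rfl⟩
    · exact ⟨n, .inr rfl⟩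
    · exact ⟨n, .inl (by rw [← mul_assoc, ha, one_mul])⟩
    · exact ⟨1 + n, .inr (by rw [zpow_one_add, ← mul_assoc, ← mul_assoc, ha, one_mul])⟩
    · refine ⟨-1 + n, .inl ?_⟩
      rw [zpow_add, zpow_neg_one, mul_inv_rev, inv_eq_of_mul_eq_one_right ha,
        inv_eq_of_mul_eq_one_right hb, mul_assoc]
  induction hg using Subgroup.closure_induction_left with
  | one => exact ⟨0, .inl (zpow_zero _).symm⟩
  | mul_left x hx y _ ih => exact closed_mul_left x hx y ih
  | inv_mul_cancel x hx y _ ih =>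
    rcases hx with rfl | rfl
    · rw [inv_eq_of_mul_eq_one_right ha]
      exact closed_mul_left _ (.inl rfl) y ih
    · rw [inv_eq_of_mul_eq_one_right hb]
      exact closed_mul_left _ (.inr rfl) y ih

open Matrix

def BottomRowIncreasing (M : Matrix (Fin 2) (Fin 2) ℤ) : Prop :=
  0 ≤ M 1 0 ∧ M 1 0 < M 1 1

theorem BottomRowIncreasing.mul {ℓ : ℤ} (hℓ : 2 ≤ ℓ) {M : Matrix (Fin 2) (Fin 2) ℤ}
    (hM : BottomRowIncreasing M) : BottomRowIncreasing (M * !![-1, -ℓ; ℓ, ℓ ^ 2 - 1]) := by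
  obtain ⟨hc, hcd⟩ := hM
  simp only [BottomRowIncreasing, mul_apply, Fin.sum_univ_two, of_apply, cons_val',
    cons_val_zero, cons_val_one, cons_val_fin_one, mul_neg, mul_one]
  have hd : 0 ≤ M 1 1 := by omega
  have hℓd : 0 ≤ ℓ * M 1 1 - M 1 0 := by nlinarith
  constructor <;> nlinarith [mul_nonneg (by omega : (0 : ℤ) ≤ ℓ - 2) hℓd,
    mul_nonneg (by omega : (0 : ℤ) ≤ ℓ - 2) hd]

theorem bottomRowIncreasing_pow {ℓ : ℤ} (hℓ : 2 ≤ ℓ) (k : ℕ) :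
    BottomRowIncreasing (!![-1, -ℓ; ℓ, ℓ ^ 2 - 1] ^ k) := by
  induction k with
  | zero => simp [BottomRowIncreasing]
  | succ k ih =>
    rw [pow_succ]
    exact ih.mul hℓ

theorem coe_zpow_ne {ℓ : ℤ} (hℓ : 2 ≤ ℓ) {g : GL (Fin 2) ℤ}
    (hg : (g : Matrix (Fin 2) (Fin 2) ℤ) = !![-1, -ℓ; ℓ, ℓ ^ 2 - 1])
    {X Y : Matrix (Fin 2) (Fin 2) ℤ} (hYX : Y * X = 1)
    (hX : ¬BottomRowIncreasing X) (hY : ¬BottomRowIncreasing Y) (n : ℤ) :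
    ((g ^ n : GL (Fin 2) ℤ) : Matrix (Fin 2) (Fin 2) ℤ) ≠ X := by
  have hpow (k : ℕ) :
      BottomRowIncreasing ((g ^ k : GL (Fin 2) ℤ) : Matrix (Fin 2) (Fin 2) ℤ) := by
    rw [Units.val_pow_eq_pow_val, hg]
    exact bottomRowIncreasing_pow hℓ k
  obtain ⟨k, rfl | rfl⟩ := Int.eq_nat_or_neg n
  · rw [zpow_natCast]
    exact fun h => hX (h ▸ hpow k)
  · intro h
    apply hY
    rw [← inv_eq_left_inv hYX, ← h, ← coe_units_inv, _root_.zpow_neg, inv_inv, zpow_natCast]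
    exact hpow k

/-- For `ℓ ≥ 3`, neither `-I` nor `[[0,-1],[-1,0]]` belongs to the subgroup of
`GL(2, ℤ)` generated by `A = [[-1,0],[ℓ,1]]` and `B = [[1,ℓ],[0,-1]]`. -/
theorem stmt_6 (ℓ : ℤ) (hℓ : 3 ≤ ℓ)
    (A B : Matrix.GeneralLinearGroup (Fin 2) ℤ)
    (hA : (A : Matrix (Fin 2) (Fin 2) ℤ) = !![-1, 0; ℓ, 1])
    (hB : (B : Matrix (Fin 2) (Fin 2) ℤ) = !![1, ℓ; 0, -1]) :
    ∀ M ∈ Subgroup.closure {A, B},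
      (M : Matrix (Fin 2) (Fin 2) ℤ) ≠ -1 ∧
      (M : Matrix (Fin 2) (Fin 2) ℤ) ≠ !![0, -1; -1, 0] := by
  have hA2 : A * A = 1 := Units.ext <| by simp [hA, one_fin_two]
  have hB2 : B * B = 1 := Units.ext <| by simp [hB, one_fin_two]
  have hAB : ((A * B : GL (Fin 2) ℤ) : Matrix (Fin 2) (Fin 2) ℤ) =
      !![-1, -ℓ; ℓ, ℓ ^ 2 - 1] := by
    simp [hA, hB]
    ring
  have hℓ2 : 2 ≤ ℓ := by omega
  intro M hM
  obtain ⟨n, rfl | rfl⟩ := exists_zpow_of_mem_closure_pair hA2 hB2 hM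
  · refine ⟨coe_zpow_ne hℓ2 hAB (Y := -1) (by simp) ?_ ?_ n,
      coe_zpow_ne hℓ2 hAB (Y := !![0, -1; -1, 0]) ?_ ?_ ?_ n⟩ <;>
      simp [BottomRowIncreasing, one_fin_two]
  · have coe_zpow_eq {T : Matrix (Fin 2) (Fin 2) ℤ}
        (h : ((A * (A * B) ^ n : GL (Fin 2) ℤ) : Matrix (Fin 2) (Fin 2) ℤ) = T) :
        (((A * B) ^ n : GL (Fin 2) ℤ) : Matrix (Fin 2) (Fin 2) ℤ) = A * T := by
      rw [← h, ← Units.val_mul, ← mul_assoc, hA2, one_mul]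
    refine ⟨fun h => coe_zpow_ne hℓ2 hAB (Y := -A) ?_ ?_ ?_ n (coe_zpow_eq h),
      fun h => coe_zpow_ne hℓ2 hAB (Y := !![-ℓ, -1; 1, 0]) ?_ ?_ ?_ n (coe_zpow_eq h)⟩ <;>
      simp [BottomRowIncreasing, hA, one_fin_two] <;> omega
end

section
/- Let m ≥ 4 be an integer and set G := [[m−1, 1], [−m, −1]], a 2×2 integer matrix of determinant 1. Then for every natural number s ≥ 0, Gˢ ≠ −I, and Gˢ · [[1, 1], [0, −1]] ≠ [[0, −1], [−1, 0]]. -/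
/-!
Right multiplication by `G` sends a first row `(a, b)` to `((m - 1) a - m b, a - b)`, and for
`m ≥ 4` this map preserves the cone `0 ≤ b, 2 b < a`, which contains the first row `(1, 0)` of
`I`. So the `(0, 0)`-entry of every power `Gˢ` is positive, whereas it is `-1` in `-I` and the
`(0, 0)`-entry of `Gˢ · [[1, 1], [0, -1]]` equals that of `Gˢ`, against `0` on the right.
-/

open Matrix

section FirstRowCone

variable {m : ℤ}

def FirstRowInCone (A : Matrix (Fin 2) (Fin 2) ℤ) : Prop :=
  0 ≤ A 0 1 ∧ 2 * A 0 1 < A 0 0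

lemma FirstRowInCone.mul (hm : 4 ≤ m) {A : Matrix (Fin 2) (Fin 2) ℤ} (hA : FirstRowInCone A) :
    FirstRowInCone (A * !![m - 1, 1; -m, -1]) := by
  obtain ⟨hb, hab⟩ := hA
  have hmb : 0 ≤ (m - 4) * A 0 1 := mul_nonneg (by linarith) hb
  simp only [FirstRowInCone, mul_apply, Fin.sum_univ_two, of_apply, cons_val', cons_val_zero,
    cons_val_one, empty_val', cons_val_fin_one]
  constructor <;> nlinarith

lemma FirstRowInCone.pow (hm : 4 ≤ m) (s : ℕ) :
    FirstRowInCone ((!![m - 1, 1; -m, -1] : Matrix (Fin 2) (Fin 2) ℤ) ^ s) := by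
  induction s with
  | zero => simp [FirstRowInCone]
  | succ s ih => rw [pow_succ]; exact ih.mul hm

lemma FirstRowInCone.apply_zero_zero_pos {A : Matrix (Fin 2) (Fin 2) ℤ} (hA : FirstRowInCone A) :
    0 < A 0 0 := by
  obtain ⟨hb, hab⟩ := hA
  omega

end FirstRowCone

/-- For an integer `m ≥ 4` and `G = [[m-1,1],[-m,-1]]`, for every natural number `s`
we have `G^s ≠ -I` and `G^s * [[1,1],[0,-1]] ≠ [[0,-1],[-1,0]]`. -/
theorem stmt_7 (m : ℤ) (hm : 4 ≤ m)
    (G : Matrix (Fin 2) (Fin 2) ℤ) (hG : G = !![m - 1, 1; -m, -1]) :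
    ∀ s : ℕ, G ^ s ≠ -1 ∧ G ^ s * !![1, 1; 0, -1] ≠ !![0, -1; -1, 0] := by
  intro s
  have hpos : 0 < (G ^ s) 0 0 := hG ▸ (FirstRowInCone.pow hm s).apply_zero_zero_pos
  constructor
  · intro h
    have h00 := congrFun (congrFun h 0) 0
    simp only [neg_apply, one_apply_eq] at h00
    omega
  · intro h
    have h00 := congrFun (congrFun h 0) 0
    simp only [mul_apply, Fin.sum_univ_two, of_apply, cons_val', cons_val_zero, cons_val_one,
      cons_val_fin_one, mul_one, mul_zero, add_zero] at h00
    omega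
end

section
/- Let ℓ ≥ 2 and m ≥ 2 be integers. Define a sequence of integers by a₁ = 0, a₂ = 1 and a_{t+1} = ℓ·a_t − a_{t−1} for t ≥ 2. Then the sequence d_t := 2m·(a_{t+1})² − 2ℓ·a_{t+1}·a_t + 2·(a_t)² tends to +∞ as t → ∞. -/
/-!
The binary quadratic form `Q(x, y) = x² - ℓxy + y²` is invariant under the step
`(x, y) ↦ (ℓx - y, x)` of the recurrence, so `Q(a_{t+1}, a_t) = Q(a₂, a₁) = 1` for all `t ≥ 1`
and hence `d_t = 2(m - 1) a_{t+1}² + 2`. Since `ℓ ≥ 2`, the integers `a_t` are strictly increasing,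
so `a_t → ∞`, and with `m ≥ 2` so does `d_t`.
-/

open Filter

theorem quadForm_recurrence_step {R : Type*} [CommRing R] (ℓ x y : R) :
    (ℓ * x - y) ^ 2 - ℓ * (ℓ * x - y) * x + x ^ 2 = x ^ 2 - ℓ * x * y + y ^ 2 := by
  ring

theorem Int.tendsto_atTop_of_lt_succ {f : ℕ → ℤ} {n : ℕ} (hf : ∀ t, n ≤ t → f t < f (t + 1)) :
    Tendsto f atTop atTop := by
  have hlin : ∀ t, n ≤ t → f n + ((t : ℤ) - n) ≤ f t := by
    intro t ht
    induction t, ht using Nat.le_induction with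
    | base => simp
    | succ t ht ih =>
      have := hf t ht
      push_cast
      linarith
  refine tendsto_atTop_mono' _ (eventually_atTop.2 ⟨n, hlin⟩) ?_
  exact tendsto_atTop_add_const_left _ _
    (tendsto_atTop_add_const_right _ _ tendsto_natCast_atTop_atTop)

section Recurrence

variable {ℓ : ℤ} {a : ℕ → ℤ}

theorem quadForm_eq_of_recurrence (harec : ∀ t : ℕ, 2 ≤ t → a (t + 1) = ℓ * a t - a (t - 1))
    {t : ℕ} (ht : 1 ≤ t) :
    a (t + 1) ^ 2 - ℓ * a (t + 1) * a t + a t ^ 2 = a 2 ^ 2 - ℓ * a 2 * a 1 + a 1 ^ 2 := by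
  induction t, ht using Nat.le_induction with
  | base => rfl
  | succ t ht ih =>
    rw [harec (t + 1) (by omega), Nat.add_sub_cancel, quadForm_recurrence_step, ih]

theorem lt_succ_of_recurrence (hℓ : 2 ≤ ℓ)
    (harec : ∀ t : ℕ, 2 ≤ t → a (t + 1) = ℓ * a t - a (t - 1))
    (h1 : 0 ≤ a 1) (h12 : a 1 < a 2) {t : ℕ} (ht : 1 ≤ t) : a t < a (t + 1) := by
  suffices 0 ≤ a t ∧ a t < a (t + 1) from this.2
  induction t, ht using Nat.le_induction with
  | base => exact ⟨h1, h12⟩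
  | succ t ht ih =>
    obtain ⟨hnonneg, hlt⟩ := ih
    have hrec := harec (t + 1) (by omega)
    rw [Nat.add_sub_cancel] at hrec
    refine ⟨by linarith, ?_⟩
    nlinarith

end Recurrence

/-- For integers `ℓ, m ≥ 2` and the sequence `a₁ = 0`, `a₂ = 1`,
`a_{t+1} = ℓ a_t - a_{t-1}` for `t ≥ 2`, the sequence
`d_t = 2m a_{t+1}² - 2ℓ a_{t+1} a_t + 2 a_t²` tends to `+∞`. -/
theorem stmt_9 (ℓ m : ℤ) (hℓ : 2 ≤ ℓ) (hm : 2 ≤ m)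
    (a : ℕ → ℤ) (ha1 : a 1 = 0) (ha2 : a 2 = 1)
    (harec : ∀ t : ℕ, 2 ≤ t → a (t + 1) = ℓ * a t - a (t - 1)) :
    Tendsto (fun t : ℕ =>
      2 * m * (a (t + 1)) ^ 2 - 2 * ℓ * (a (t + 1)) * (a t) + 2 * (a t) ^ 2)
      atTop atTop := by
  have hd : ∀ t, 1 ≤ t → 2 * (m - 1) * a (t + 1) ^ 2 + 2 =
      2 * m * (a (t + 1)) ^ 2 - 2 * ℓ * (a (t + 1)) * (a t) + 2 * (a t) ^ 2 := by
    intro t ht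
    have hQ := quadForm_eq_of_recurrence harec ht
    rw [ha1, ha2] at hQ
    linear_combination -2 * hQ
  have ha : Tendsto (fun t => a (t + 1)) atTop atTop :=
    (tendsto_add_atTop_iff_nat 1).2 <| Int.tendsto_atTop_of_lt_succ fun _ ht =>
      lt_succ_of_recurrence hℓ harec ha1.ge (by rw [ha1, ha2]; norm_num) ht
  have hlim : Tendsto (fun t => 2 * (m - 1) * a (t + 1) ^ 2 + 2) atTop atTop :=
    tendsto_atTop_add_const_right _ 2
      (((tendsto_pow_atTop two_ne_zero).comp ha).const_mul_atTop' (by linarith))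
  exact hlim.congr' (eventually_atTop.2 ⟨1, hd⟩)
end

section
/- Consider the subgroup H of GL(2, ℤ) generated by the matrices [[−1, 0], [2, 1]] and [[1, 2], [0, −1]]. Then every matrix M ∈ H satisfies (1, 1)·M = (1, 1) (the all-ones row vector is fixed under right multiplication by M); consequently, neither −I nor [[0, −1], [−1, 0]] belongs to H. -/
open Matrix

/-! Both generators fix the row vector `(1, 1)`, and so does the whole subgroup they generate,
since the matrices fixing a given row vector form a subgroup. Both `-I` and `[[0, -1], [-1, 0]]`
send `(1, 1)` to `(-1, -1)`. -/

namespace Matrix.GeneralLinearGroup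

variable {n R : Type*} [Fintype n] [DecidableEq n] [CommRing R]

def vecMulStabilizer (v : n → R) : Subgroup (GL n R) where
  carrier := {M | v ᵥ* (M : Matrix n n R) = v}
  one_mem' := vecMul_one v
  mul_mem' {M N} hM hN := by
    change v ᵥ* _ = v
    rw [coe_mul, ← vecMul_vecMul, hM.out, hN.out]
  inv_mem' {M} hM := by
    change v ᵥ* _ = v
    conv_lhs => rw [← hM.out]
    rw [vecMul_vecMul, ← coe_mul, mul_inv_cancel, coe_one, vecMul_one]

@[simp]
theorem mem_vecMulStabilizer {v : n → R} {M : GL n R} :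
    M ∈ vecMulStabilizer v ↔ v ᵥ* (M : Matrix n n R) = v :=
  Iff.rfl

end Matrix.GeneralLinearGroup

open Matrix.GeneralLinearGroup in
/-- Every matrix `M` in the subgroup of `GL(2, ℤ)` generated by `[[-1,0],[2,1]]` and
`[[1,2],[0,-1]]` fixes the all-ones row vector under right multiplication; consequently
neither `-I` nor `[[0,-1],[-1,0]]` belongs to this subgroup. -/
theorem stmt_11 (A B : Matrix.GeneralLinearGroup (Fin 2) ℤ)
    (hA : (A : Matrix (Fin 2) (Fin 2) ℤ) = !![-1, 0; 2, 1])
    (hB : (B : Matrix (Fin 2) (Fin 2) ℤ) = !![1, 2; 0, -1]) :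
    (∀ M ∈ Subgroup.closure {A, B},
      ![(1 : ℤ), 1] ᵥ* (M : Matrix (Fin 2) (Fin 2) ℤ) = ![1, 1]) ∧
    (∀ M ∈ Subgroup.closure {A, B},
      (M : Matrix (Fin 2) (Fin 2) ℤ) ≠ -1 ∧
      (M : Matrix (Fin 2) (Fin 2) ℤ) ≠ !![0, -1; -1, 0]) := by
  have generators_fix : {A, B} ⊆ (vecMulStabilizer ![(1 : ℤ), 1] : Set _) := by
    rintro _ (rfl | rfl) <;> simp [hA, hB]
  have closure_fixes : ∀ M ∈ Subgroup.closure {A, B},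
      ![(1 : ℤ), 1] ᵥ* (M : Matrix (Fin 2) (Fin 2) ℤ) = ![1, 1] :=
    fun M hM => (Subgroup.closure_le _).2 generators_fix hM
  refine ⟨closure_fixes, fun M hM => ⟨fun h => ?_, fun h => ?_⟩⟩
  · simpa [h, vecMul_neg] using closure_fixes M hM
  · simpa [h] using closure_fixes M hM
end
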